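/- arXiv:0712.3937 — 5 statements merged into one kernel-verified Lean document; each statement's English description precedes it below -/
import Mathlib

section
/- Let M be a smooth connected n-dimensional manifold, and let 𝔤, 𝔥 be Lie algebras of smooth vector fields on M such that (i) every element of 𝔤 commutes with every element of 𝔥 (all Lie brackets vanish), and (ii) for every x ∈ M the evaluation maps ev_x : 𝔤 → T_x M and ev_x : 𝔥 → T_x M are surjective. Then for every x ∈ M both evaluation maps are injective; in particular dim 𝔤 = dim 𝔥 = n. -/
open VectorField Metric Module
set_option maxHeartbeats 1000000

lemma euler_aux {E : Type*} [NormedAddCommGroup E] [NormedSpace ℝ E]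
    (X Y : E → E) (y z : E) (C₂ L : ℝ) (hC₂0 : 0 ≤ C₂) (hL : 0 ≤ L) (hL2 : L ≤ 1/2)
    (hTaylor : ∀ w ∈ closedBall y 1, ∀ u : E, w + u ∈ closedBall y 1 →
      ‖X (w + u) - X w - fderiv ℝ X w u‖ ≤ C₂ * ‖u‖ * ‖u‖)
    (hcommY : ∀ w : E, fderiv ℝ X w (Y w) = fderiv ℝ Y w (X w))
    (hρ1 : ‖z - y‖ ≤ 1)
    (hYlip : ∀ w ∈ closedBall y 1, ‖Y w - (y - z)‖ ≤ L * ‖w - y‖)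
    (hDY : ∀ w ∈ closedBall y 1, ‖fderiv ℝ Y w‖ ≤ L)
    (N : ℕ) (hN : 1 ≤ N) :
    ∃ z' : E, ‖z' - y‖ ≤ L * ‖z - y‖ ∧ ‖X z‖ ≤ 3 * ‖X z'‖ + 12 * C₂ / N := by
  have hN1 : (1:ℝ) ≤ (N:ℝ) := by exact_mod_cast hN
  have hNpos : (0:ℝ) < N := by linarith
  set τ : ℝ := (N : ℝ)⁻¹ with hτdef
  have hτpos : 0 < τ := by positivity
  have hτ1 : τ ≤ 1 := by rw [hτdef, inv_le_one_iff₀]; right; exact hN1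
  have hNτ : (N:ℝ) * τ = 1 := mul_inv_cancel₀ (ne_of_gt hNpos)
  set ρ : ℝ := ‖z - y‖ with hρdef
  have hρ0 : 0 ≤ ρ := norm_nonneg _
  set c : E := y - z with hcdef
  have hcnorm : ‖c‖ = ρ := by rw [hcdef, hρdef, norm_sub_rev]
  set seq : ℕ → E := fun k => (fun w => w + τ • Y w)^[k] z with hseqdef
  have seq0 : seq 0 = z := rfl
  have seqS : ∀ k, seq (k + 1) = seq k + τ • Y (seq k) := by
    intro k
    rw [hseqdef]
    simp only [Function.iterate_succ_apply']
  have main : ∀ k : ℕ, k ≤ N →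
      ‖seq k - y - (1 - (k:ℝ) * τ) • (z - y)‖ ≤ ((k:ℝ) * τ) * (L * ρ) ∧
      ‖X z‖ ≤ (1 + τ) ^ k * ‖X (seq k)‖ + ((k:ℝ) * τ) * (1 + τ) ^ k * (4 * C₂ * τ) := by
    intro k hkN
    induction k with
    | zero => simp [seq0]
    | succ k ih =>
      obtain ⟨ihA, ihB⟩ := ih (le_trans (Nat.le_succ k) hkN)
      have hkτ : (k:ℝ) * τ ≤ 1 := by
        have hc : (k:ℝ) ≤ (N:ℝ) := by exact_mod_cast le_trans (Nat.le_succ k) hkN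
        nlinarith
      have hk1τ : ((k:ℝ) + 1) * τ ≤ 1 := by
        have hc : ((k:ℝ) + 1) ≤ (N:ℝ) := by exact_mod_cast hkN
        nlinarith
      have hkτ0 : 0 ≤ (k:ℝ) * τ := by positivity
      have hLρρ : L * ρ ≤ ρ / 2 := by nlinarith
      -- position bound at step k
      have memBk : ‖seq k - y‖ ≤ ρ := by
        have h1 := norm_sub_norm_le (seq k - y) ((1 - (k:ℝ) * τ) • (z - y))
        rw [norm_smul, Real.norm_eq_abs, abs_of_nonneg (by linarith : (0:ℝ) ≤ 1 - (k:ℝ)*τ),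
          ← hρdef] at h1
        nlinarith
      have memBk' : seq k ∈ closedBall y 1 := by
        rw [mem_closedBall_iff_norm]; linarith
      -- drift estimate
      have hYk : ‖Y (seq k) - c‖ ≤ L * ρ := by
        calc ‖Y (seq k) - c‖ ≤ L * ‖seq k - y‖ := hYlip (seq k) memBk'
          _ ≤ L * ρ := mul_le_mul_of_nonneg_left memBk hL
      -- position invariant at step k+1
      have stepA : ‖seq (k+1) - y - (1 - ((k:ℝ)+1) * τ) • (z - y)‖ ≤
          (((k:ℝ)+1) * τ) * (L * ρ) := by
        have hEq : seq (k+1) - y - (1 - ((k:ℝ)+1) * τ) • (z - y)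
            = (seq k - y - (1 - (k:ℝ) * τ) • (z - y)) + τ • (Y (seq k) - c) := by
          rw [seqS k, hcdef]; module
        have h2 := norm_add_le (seq k - y - (1 - (k:ℝ) * τ) • (z - y)) (τ • (Y (seq k) - c))
        rw [← hEq, norm_smul, Real.norm_eq_abs, abs_of_nonneg (le_of_lt hτpos)] at h2
        have h3 : τ * ‖Y (seq k) - c‖ ≤ τ * (L * ρ) :=
          mul_le_mul_of_nonneg_left hYk (le_of_lt hτpos)
        calc ‖seq (k+1) - y - (1 - ((k:ℝ)+1) * τ) • (z - y)‖
            ≤ ((k:ℝ) * τ) * (L * ρ) + τ * (L * ρ) := by linarith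
          _ = (((k:ℝ)+1) * τ) * (L * ρ) := by ring
      have stepA' : ‖seq (k+1) - y - (1 - ((k+1:ℕ):ℝ) * τ) • (z - y)‖ ≤
          (((k+1:ℕ):ℝ) * τ) * (L * ρ) := by push_cast; exact stepA
      refine ⟨stepA', ?_⟩
      -- position bound at step k+1
      have memBk1 : ‖seq (k+1) - y‖ ≤ ρ := by
        have h1 := norm_sub_norm_le (seq (k+1) - y) ((1 - ((k:ℝ)+1) * τ) • (z - y))
        rw [norm_smul, Real.norm_eq_abs, abs_of_nonneg (by linarith : (0:ℝ) ≤ 1 - ((k:ℝ)+1)*τ),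
          ← hρdef] at h1
        nlinarith
      have memBk1' : seq (k+1) ∈ closedBall y 1 := by
        rw [mem_closedBall_iff_norm]; linarith
      -- field norm
      have hYnorm : ‖Y (seq k)‖ ≤ 2 * ρ := by
        have h1 := norm_sub_norm_le (Y (seq k)) c
        rw [hcnorm] at h1
        nlinarith
      have hunorm : ‖τ • Y (seq k)‖ ≤ 2 * τ := by
        rw [norm_smul, Real.norm_eq_abs, abs_of_nonneg (le_of_lt hτpos)]
        nlinarith
      -- Taylor step
      have htay2 : ‖X (seq (k+1)) - X (seq k) - fderiv ℝ X (seq k) (τ • Y (seq k))‖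
          ≤ 4 * C₂ * τ ^ 2 := by
        have h1 := hTaylor (seq k) memBk' (τ • Y (seq k)) (by rw [← seqS k]; exact memBk1')
        rw [← seqS k] at h1
        calc ‖X (seq (k+1)) - X (seq k) - fderiv ℝ X (seq k) (τ • Y (seq k))‖
            ≤ C₂ * ‖τ • Y (seq k)‖ * ‖τ • Y (seq k)‖ := h1
          _ ≤ 4 * C₂ * τ ^ 2 := by
              have sq : ‖τ • Y (seq k)‖ * ‖τ • Y (seq k)‖ ≤ 4 * τ ^ 2 := by
                nlinarith [norm_nonneg (τ • Y (seq k))]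
              have := mul_le_mul_of_nonneg_left sq hC₂0
              nlinarith
      -- commutation and linear bound
      have h3 : ‖fderiv ℝ X (seq k) (τ • Y (seq k))‖ ≤ τ * ((1/2) * ‖X (seq k)‖) := by
        rw [map_smul, hcommY (seq k), norm_smul, Real.norm_eq_abs,
          abs_of_nonneg (le_of_lt hτpos)]
        have h4 : ‖fderiv ℝ Y (seq k) (X (seq k))‖ ≤ (1/2) * ‖X (seq k)‖ := by
          calc ‖fderiv ℝ Y (seq k) (X (seq k))‖
              ≤ ‖fderiv ℝ Y (seq k)‖ * ‖X (seq k)‖ := ContinuousLinearMap.le_opNorm _ _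
            _ ≤ L * ‖X (seq k)‖ :=
                mul_le_mul_of_nonneg_right (hDY (seq k) memBk') (norm_nonneg _)
            _ ≤ (1/2) * ‖X (seq k)‖ :=
                mul_le_mul_of_nonneg_right (by linarith) (norm_nonneg _)
        exact mul_le_mul_of_nonneg_left h4 (le_of_lt hτpos)
      -- one-step inequality
      have hstepX : ‖X (seq k)‖ ≤ (1 + τ) * (‖X (seq (k+1))‖ + 4 * C₂ * τ ^ 2) := by
        have h1 := norm_sub_norm_le (X (seq k)) (X (seq (k+1)))
        have h2 : ‖X (seq k) - X (seq (k+1))‖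
            ≤ ‖X (seq (k+1)) - X (seq k) - fderiv ℝ X (seq k) (τ • Y (seq k))‖
              + ‖fderiv ℝ X (seq k) (τ • Y (seq k))‖ := by
          have hEq : X (seq k) - X (seq (k+1)) =
              -(X (seq (k+1)) - X (seq k) - fderiv ℝ X (seq k) (τ • Y (seq k)))
              - fderiv ℝ X (seq k) (τ • Y (seq k)) := by module
          rw [hEq]
          exact le_trans (norm_sub_le _ _) (by rw [norm_neg])
        have hB : (1 - τ/2) * ‖X (seq k)‖ ≤ ‖X (seq (k+1))‖ + 4*C₂*τ^2 := by linarith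
        nlinarith [mul_le_mul_of_nonneg_left hB (by linarith : (0:ℝ) ≤ 1 + τ),
          mul_nonneg (mul_nonneg (le_of_lt hτpos) (by linarith : (0:ℝ) ≤ 1 - τ))
            (norm_nonneg (X (seq k)))]
      -- combine
      have hpow0 : (0:ℝ) < (1 + τ) ^ k := by positivity
      have hpowS : (1 + τ) ^ (k+1) = (1 + τ) ^ k * (1 + τ) := pow_succ _ _
      have hfin : ‖X z‖ ≤ (1 + τ) ^ (k+1) * ‖X (seq (k+1))‖
          + (((k:ℝ)+1) * τ) * (1 + τ) ^ (k+1) * (4 * C₂ * τ) := by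
        have hmul := mul_le_mul_of_nonneg_left hstepX (le_of_lt hpow0)
        have hmono : (1 + τ) ^ k ≤ (1 + τ) ^ (k+1) := by rw [hpowS]; nlinarith
        have hC₂τ : (0:ℝ) ≤ 4 * C₂ * τ := by positivity
        have e1 : ((k:ℝ) * τ) * (1 + τ) ^ k * (4 * C₂ * τ)
            ≤ ((k:ℝ) * τ) * (1 + τ) ^ (k+1) * (4 * C₂ * τ) := by
          have := mul_le_mul_of_nonneg_left hmono hkτ0
          exact mul_le_mul_of_nonneg_right this hC₂τ
        have e2 : (1 + τ) ^ k * ((1 + τ) * (‖X (seq (k+1))‖ + 4 * C₂ * τ ^ 2))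
            = (1 + τ) ^ (k+1) * ‖X (seq (k+1))‖ + τ * (1 + τ) ^ (k+1) * (4 * C₂ * τ) := by
          rw [hpowS]; ring
        calc ‖X z‖ ≤ (1 + τ) ^ k * ‖X (seq k)‖ + ((k:ℝ) * τ) * (1 + τ) ^ k * (4 * C₂ * τ) := ihB
          _ ≤ (1 + τ) ^ k * ((1 + τ) * (‖X (seq (k+1))‖ + 4 * C₂ * τ ^ 2))
              + ((k:ℝ) * τ) * (1 + τ) ^ (k+1) * (4 * C₂ * τ) := by linarith
          _ = (1 + τ) ^ (k+1) * ‖X (seq (k+1))‖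
              + (((k:ℝ)+1) * τ) * (1 + τ) ^ (k+1) * (4 * C₂ * τ) := by rw [e2]; ring
      calc ‖X z‖ ≤ (1 + τ) ^ (k+1) * ‖X (seq (k+1))‖
            + (((k:ℝ)+1) * τ) * (1 + τ) ^ (k+1) * (4 * C₂ * τ) := hfin
        _ = (1 + τ) ^ (k+1) * ‖X (seq (k+1))‖
            + (((k+1:ℕ):ℝ) * τ) * (1 + τ) ^ (k+1) * (4 * C₂ * τ) := by push_cast; ring
  obtain ⟨mA, mB⟩ := main N le_rfl
  refine ⟨seq N, ?_, ?_⟩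
  · have h0 : (1 - (N:ℝ) * τ) = 0 := by rw [hNτ]; ring
    rw [h0, zero_smul, sub_zero] at mA
    calc ‖seq N - y‖ ≤ ((N:ℝ) * τ) * (L * ρ) := mA
      _ = L * ρ := by rw [hNτ]; ring
  · have hexp : (1 + τ) ^ N ≤ 3 := by
      calc (1 + τ) ^ N ≤ (Real.exp τ) ^ N := by
            apply pow_le_pow_left₀ (by linarith)
            linarith [Real.add_one_le_exp τ]
        _ = Real.exp ((N:ℝ) * τ) := by rw [← Real.exp_nat_mul]
        _ = Real.exp 1 := by rw [hNτ]
        _ ≤ 3 := by linarith [Real.exp_one_lt_d9]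
    calc ‖X z‖ ≤ (1 + τ) ^ N * ‖X (seq N)‖ + ((N:ℝ) * τ) * (1 + τ) ^ N * (4 * C₂ * τ) := mB
      _ ≤ 3 * ‖X (seq N)‖ + 12 * C₂ * τ := by
          rw [hNτ]
          have hp0 : (0:ℝ) ≤ (1+τ)^N := by positivity
          nlinarith [norm_nonneg (X (seq N)), mul_nonneg hC₂0 (le_of_lt hτpos)]
      _ = 3 * ‖X (seq N)‖ + 12 * C₂ / N := by rw [hτdef]; ring

theorem keyLemma {E : Type*} [NormedAddCommGroup E] [NormedSpace ℝ E] [FiniteDimensional ℝ E]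
    (h : Submodule ℝ (E → E)) (hhsmooth : ∀ Y ∈ h, ContDiff ℝ (⊤ : ℕ∞) Y)
    (hhsurj : ∀ x : E, ∀ v : E, ∃ Y ∈ h, Y x = v)
    (X : E → E) (hX : ContDiff ℝ (⊤ : ℕ∞) X)
    (hcomm : ∀ Y ∈ h, ∀ z : E, fderiv ℝ X z (Y z) = fderiv ℝ Y z (X z))
    (x : E) (hx : X x = 0) : X = 0 := by
  have hXd : Differentiable ℝ X := hX.differentiable (by simp)
  suffices hop : IsOpen {z : E | X z = 0} by
    have hcl : IsClosed {z : E | X z = 0} := isClosed_eq hX.continuous continuous_const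
    have := IsClopen.eq_univ (s := {z : E | X z = 0}) ⟨hcl, hop⟩ ⟨x, hx⟩
    funext z
    exact (this ▸ Set.mem_univ z : z ∈ {z : E | X z = 0})
  rw [Metric.isOpen_iff]
  intro y hy
  simp only [Set.mem_setOf_eq] at hy
  -- second derivative bound for X on the unit ball around y
  obtain ⟨C₂', hC₂'⟩ := (isCompact_closedBall y 1).exists_bound_of_continuousOn
    ((hX.fderiv_right (m := (⊤ : ℕ∞)) (by simp)).fderiv_right (m := (⊤ : ℕ∞)) (by simp)).continuous.continuousOn
  set C₂ : ℝ := max C₂' 0 with hC₂def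
  have hC₂0 : 0 ≤ C₂ := le_max_right _ _
  have hDXdiff : Differentiable ℝ (fderiv ℝ X) :=
    (hX.fderiv_right (m := (⊤ : ℕ∞)) (by simp)).differentiable (by simp)
  have hDXlip : ∀ p ∈ closedBall y 1, ∀ q ∈ closedBall y 1,
      ‖fderiv ℝ X p - fderiv ℝ X q‖ ≤ C₂ * ‖p - q‖ := by
    intro p hp q hq
    exact (convex_closedBall y 1).norm_image_sub_le_of_norm_fderiv_le
      (fun w _ => hDXdiff w) (fun w hw => le_trans (hC₂' w hw) (le_max_left _ _)) hq hp
  -- Taylor estimate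
  have hTaylor : ∀ w ∈ closedBall y 1, ∀ u : E, w + u ∈ closedBall y 1 →
      ‖X (w + u) - X w - fderiv ℝ X w u‖ ≤ C₂ * ‖u‖ * ‖u‖ := by
    intro w hw u hu
    have hseg : segment ℝ w (w + u) ⊆ closedBall y 1 :=
      (convex_closedBall y 1).segment_subset hw hu
    have hsegnorm : ∀ p ∈ segment ℝ w (w + u), ‖p - w‖ ≤ ‖u‖ := by
      intro p hp
      obtain ⟨a, b, ha, hb, hab, rfl⟩ := hp
      have hEq : a • w + b • (w + u) - w = b • u := by
        have : a = 1 - b := by linarith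
        subst this; module
      rw [hEq, norm_smul]
      have h0 : (0:ℝ) ≤ ‖u‖ := norm_nonneg u
      rw [Real.norm_eq_abs, abs_of_nonneg hb]
      nlinarith
    have := (convex_segment w (w + u)).norm_image_sub_le_of_norm_fderiv_le'
      (f := X) (φ := fderiv ℝ X w) (C := C₂ * ‖u‖)
      (fun p _ => hXd p)
      (fun p hp => le_trans (hDXlip p (hseg hp) w hw)
        (mul_le_mul_of_nonneg_left (hsegnorm p hp) hC₂0))
      (left_mem_segment ℝ w (w + u)) (right_mem_segment ℝ w (w + u))
    simpa [add_sub_cancel_left, mul_assoc] using this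

  -- basis and spanning fields
  set n := finrank ℝ E with hn
  set b : Basis (Fin n) ℝ E := Module.finBasis ℝ E with hb
  choose Yb hYbmem hYbval using fun i : Fin n => hhsurj y (b i)
  have hYbs : ∀ i, ContDiff ℝ (⊤ : ℕ∞) (Yb i) := fun i => hhsmooth _ (hYbmem i)
  have hYbd : ∀ i, Differentiable ℝ (Yb i) := fun i => (hYbs i).differentiable (by simp)
  choose Mi hMi using fun i : Fin n => (isCompact_closedBall y 1).exists_bound_of_continuousOn
      ((hYbs i).fderiv_right (m := (⊤ : ℕ∞)) (by simp)).continuous.continuousOn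
  set M : ℝ := ∑ i, max (Mi i) 0 with hMdef
  have hM0 : 0 ≤ M := Finset.sum_nonneg (fun i _ => le_max_right _ _)
  have hM : ∀ i, ∀ w ∈ closedBall y 1, ‖fderiv ℝ (Yb i) w‖ ≤ M := by
    intro i w hw
    calc ‖fderiv ℝ (Yb i) w‖ ≤ Mi i := hMi i w hw
      _ ≤ max (Mi i) 0 := le_max_left _ _
      _ ≤ M := Finset.single_le_sum (fun j _ => le_max_right (Mi j) 0) (Finset.mem_univ i)
  set K : ℝ := ∑ i, ‖LinearMap.toContinuousLinearMap (b.coord i)‖ with hKdef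
  have hK0 : 0 ≤ K := Finset.sum_nonneg (fun i _ => norm_nonneg _)
  have hcoord : ∀ (c : E) (i : Fin n),
      |b.repr c i| ≤ ‖LinearMap.toContinuousLinearMap (b.coord i)‖ * ‖c‖ := by
    intro c i
    have := (LinearMap.toContinuousLinearMap (b.coord i)).le_opNorm c
    simpa [Basis.coord_apply] using this
  -- the combined field
  set Yf : E → E → E := fun c w => ∑ i, b.repr c i • Yb i w with hYfdef
  have hYfmem : ∀ c, Yf c ∈ h := by
    intro c
    have hEq : Yf c = ∑ i, b.repr c i • Yb i := by
      funext w; simp [Yf, Finset.sum_apply, Pi.smul_apply]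
    rw [hEq]
    exact Submodule.sum_mem _ (fun i _ => Submodule.smul_mem _ _ (hYbmem i))
  have hYfs : ∀ c, ContDiff ℝ (⊤ : ℕ∞) (Yf c) :=
    fun c => ContDiff.sum (fun i _ => (hYbs i).const_smul _)
  have hYfd : ∀ c, Differentiable ℝ (Yf c) := fun c => (hYfs c).differentiable (by simp)
  have hYfval : ∀ c, Yf c y = c := by
    intro c
    simp only [Yf, hYbval]
    exact b.sum_repr c
  set C₁ : ℝ := M * K + 1 with hC₁def
  have hC₁pos : (0:ℝ) < C₁ := by nlinarith
  have hYfderiv : ∀ c, ∀ w ∈ closedBall y 1, ‖fderiv ℝ (Yf c) w‖ ≤ C₁ * ‖c‖ := by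
    intro c w hw
    have hfd : fderiv ℝ (Yf c) w = ∑ i, b.repr c i • fderiv ℝ (Yb i) w := by
      rw [show Yf c = fun v => ∑ i, b.repr c i • Yb i v from rfl,
        fderiv_fun_sum (A := fun i v => b.repr c i • Yb i v) (fun i _ => (hYbd i w).const_smul (b.repr c i))]
      congr 1
      ext i : 1
      rw [fderiv_fun_const_smul (hYbd i w)]
    rw [hfd]
    calc ‖∑ i, b.repr c i • fderiv ℝ (Yb i) w‖
        ≤ ∑ i, ‖b.repr c i • fderiv ℝ (Yb i) w‖ := norm_sum_le _ _
      _ = ∑ i, |b.repr c i| * ‖fderiv ℝ (Yb i) w‖ := by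
          simp [norm_smul, Real.norm_eq_abs]
      _ ≤ ∑ i, (‖LinearMap.toContinuousLinearMap (b.coord i)‖ * ‖c‖) * M := by
          refine Finset.sum_le_sum (fun i _ => ?_)
          exact mul_le_mul (hcoord c i) (hM i w hw) (norm_nonneg _)
            (mul_nonneg (norm_nonneg _) (norm_nonneg _))
      _ = (M * K) * ‖c‖ := by rw [← Finset.sum_mul, ← Finset.sum_mul, hKdef]; ring
      _ ≤ C₁ * ‖c‖ := by nlinarith [norm_nonneg c]
  have hYflip : ∀ c, ∀ w ∈ closedBall y 1, ‖Yf c w - c‖ ≤ C₁ * ‖c‖ * ‖w - y‖ := by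
    intro c w hw
    have := (convex_closedBall y 1).norm_image_sub_le_of_norm_fderiv_le
      (fun p _ => hYfd c p) (fun p hp => hYfderiv c p hp)
      (mem_closedBall_self zero_le_one) hw
    rwa [hYfval c] at this
  -- derivative of X vanishes at y
  have hDXy : fderiv ℝ X y = 0 := by
    ext v
    obtain ⟨Y, hY, hYv⟩ := hhsurj y v
    rw [ContinuousLinearMap.zero_apply, ← hYv, hcomm Y hY y, hy, map_zero]
  -- the radius
  set r : ℝ := min 1 (1 / (2 * C₁)) with hrdef
  have hrpos : 0 < r := lt_min one_pos (by positivity)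
  have hr1 : r ≤ 1 := min_le_left _ _
  have hrC₁ : C₁ * r ≤ 1 / 2 := by
    have h1 : r ≤ 1 / (2 * C₁) := min_le_right _ _
    calc C₁ * r ≤ C₁ * (1 / (2 * C₁)) := by nlinarith
      _ = 1 / 2 := by field_simp

  -- single-scale estimate via the Euler scheme
  have euler : ∀ z : E, ‖z - y‖ ≤ r → ∀ N : ℕ, 1 ≤ N →
      ∃ z' : E, ‖z' - y‖ ≤ (C₁ * ‖z - y‖) * ‖z - y‖ ∧
        ‖X z‖ ≤ 3 * ‖X z'‖ + 12 * C₂ / N := by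
    intro z hz N hN
    set c : E := y - z with hcdef
    have hcnorm : ‖c‖ = ‖z - y‖ := norm_sub_rev _ _
    refine euler_aux X (Yf c) y z C₂ (C₁ * ‖z - y‖) hC₂0 ?_ ?_ hTaylor
      (fun w => hcomm (Yf c) (hYfmem c) w) (le_trans hz hr1) ?_ ?_ N hN
    · positivity
    · calc C₁ * ‖z - y‖ ≤ C₁ * r := mul_le_mul_of_nonneg_left hz (le_of_lt hC₁pos)
        _ ≤ 1 / 2 := hrC₁
    · intro w hw
      have := hYflip c w hw
      rwa [hcnorm, hcdef] at this
    · intro w hw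
      have := hYfderiv c w hw
      rwa [hcnorm] at this
  -- multiscale iteration
  have T : ∀ k : ℕ, ∀ ρ' : ℝ, ρ' ≤ r → ∀ z : E, ‖z - y‖ ≤ ρ' → ∀ ε : ℝ, 0 < ε →
      ‖X z‖ ≤ 3 ^ k * C₂ * ((2:ℝ)⁻¹ ^ k * ρ') ^ 2 + ε := by
    intro k
    induction k with
    | zero =>
      intro ρ' hρ' z hz ε hε
      have hρ'0 : 0 ≤ ρ' := le_trans (norm_nonneg _) hz
      have hz1 : z ∈ closedBall y 1 := by
        rw [mem_closedBall_iff_norm]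
        exact le_trans hz (le_trans hρ' hr1)
      have h1 := hTaylor y (mem_closedBall_self zero_le_one) (z - y)
        (by rwa [add_sub_cancel])
      rw [add_sub_cancel, hy, hDXy] at h1
      simp only [ContinuousLinearMap.zero_apply, sub_zero] at h1
      have h2 : ‖X z‖ ≤ C₂ * ρ' ^ 2 := by
        have hzn : ‖z - y‖ ≤ ρ' := hz
        have hsq : ‖z - y‖ * ‖z - y‖ ≤ ρ' * ρ' :=
          mul_le_mul hzn hzn (norm_nonneg _) hρ'0
        calc ‖X z‖ ≤ C₂ * ‖z - y‖ * ‖z - y‖ := h1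
          _ ≤ C₂ * ρ' ^ 2 := by nlinarith
      have h3 : (3:ℝ) ^ 0 * C₂ * ((2:ℝ)⁻¹ ^ 0 * ρ') ^ 2 = C₂ * ρ' ^ 2 := by norm_num
      rw [h3]
      linarith
    | succ k ih =>
      intro ρ' hρ' z hz ε hε
      have hρ'0 : 0 ≤ ρ' := le_trans (norm_nonneg _) hz
      obtain ⟨N', hNge⟩ := exists_nat_ge (24 * C₂ / ε)
      set N := N' + 1 with hNdef
      have hN1 : 1 ≤ N := Nat.le_add_left 1 N'
      have hNpos : (0:ℝ) < N := by positivity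
      obtain ⟨z', hz'A, hz'B⟩ := euler z (le_trans hz hρ') N hN1
      have hz'r : ‖z' - y‖ ≤ ρ' / 2 := by
        have hzr : ‖z - y‖ ≤ r := le_trans hz hρ'
        calc ‖z' - y‖ ≤ (C₁ * ‖z - y‖) * ‖z - y‖ := hz'A
          _ ≤ (C₁ * r) * ρ' := by
              have h1 : C₁ * ‖z - y‖ ≤ C₁ * r := mul_le_mul_of_nonneg_left hzr (le_of_lt hC₁pos)
              exact mul_le_mul h1 hz (norm_nonneg _) (mul_nonneg (le_of_lt hC₁pos)
                (le_of_lt hrpos))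
          _ ≤ (1/2) * ρ' := mul_le_mul_of_nonneg_right hrC₁ hρ'0
          _ = ρ' / 2 := by ring
      have hρ'2r : ρ' / 2 ≤ r := by linarith
      have hXz' := ih (ρ' / 2) hρ'2r z' hz'r (ε / 6) (by linarith)
      have hNbound : 12 * C₂ / N ≤ ε / 2 := by
        have h1 : 24 * C₂ ≤ N' * ε := by
          have := (div_le_iff₀ hε).1 hNge
          linarith
        have h2 : (N':ℝ) ≤ N := by rw [hNdef]; push_cast; linarith
        rw [div_le_div_iff₀ hNpos (by norm_num : (0:ℝ) < 2)]
        nlinarith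
      calc ‖X z‖ ≤ 3 * ‖X z'‖ + 12 * C₂ / N := hz'B
        _ ≤ 3 * (3 ^ k * C₂ * ((2:ℝ)⁻¹ ^ k * (ρ' / 2)) ^ 2 + ε / 6) + ε / 2 := by linarith
        _ = 3 ^ (k+1) * C₂ * ((2:ℝ)⁻¹ ^ (k+1) * ρ') ^ 2 + ε := by ring
  -- conclusion: X vanishes on the ball of radius r around y
  refine ⟨r, hrpos, fun z hz => ?_⟩
  have hzr : ‖z - y‖ ≤ r := le_of_lt (by rwa [mem_ball, dist_eq_norm] at hz)
  show X z = 0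
  rw [← norm_le_zero_iff]
  refine le_of_forall_pos_le_add (fun ε hε => ?_)
  obtain ⟨k, hk⟩ : ∃ k : ℕ, (C₂ * r ^ 2) * (3/4:ℝ) ^ k < ε / 2 := by
    obtain ⟨k, hk⟩ := exists_pow_lt_of_lt_one
      (div_pos (by linarith : (0:ℝ) < ε / 2) (by nlinarith : (0:ℝ) < C₂ * r ^ 2 + 1))
      (by norm_num : (3/4:ℝ) < 1)
    refine ⟨k, ?_⟩
    have h34 : (0:ℝ) ≤ (3/4:ℝ) ^ k := by positivity
    have hcr : (0:ℝ) < C₂ * r ^ 2 + 1 := by nlinarith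
    calc (C₂ * r ^ 2) * (3/4:ℝ) ^ k ≤ (C₂ * r ^ 2 + 1) * (3/4:ℝ) ^ k := by nlinarith
      _ < (C₂ * r ^ 2 + 1) * (ε / 2 / (C₂ * r ^ 2 + 1)) := by
          exact mul_lt_mul_of_pos_left hk hcr
      _ = ε / 2 := by field_simp
  have hT := T k r le_rfl z hzr (ε / 2) (by linarith)
  have hscale : (3:ℝ) ^ k * C₂ * ((2:ℝ)⁻¹ ^ k * r) ^ 2 = (C₂ * r ^ 2) * (3/4:ℝ) ^ k := by
    rw [mul_pow, ← pow_mul]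
    rw [show (3/4:ℝ) = 3 * (2:ℝ)⁻¹ ^ 2 by norm_num, mul_pow, ← pow_mul]
    ring
  rw [hscale] at hT
  linarith

/-- If `𝔤`, `𝔥` are commuting Lie algebras of smooth vector fields on a connected
manifold `M` whose evaluation maps are surjective at all points, then the evaluation maps
are injective at all points, and `dim 𝔤 = dim 𝔥 = dim M`. -/
theorem surjective_evaluation_implies_injective
    {E : Type*} [NormedAddCommGroup E] [NormedSpace ℝ E] [FiniteDimensional ℝ E]
    (g h : Submodule ℝ (E → E))
    (hgsmooth : ∀ X ∈ g, ContDiff ℝ (⊤ : ℕ∞) X) (hhsmooth : ∀ Y ∈ h, ContDiff ℝ (⊤ : ℕ∞) Y)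
    (hgbracket : ∀ X ∈ g, ∀ Y ∈ g, lieBracket ℝ X Y ∈ g)
    (hhbracket : ∀ X ∈ h, ∀ Y ∈ h, lieBracket ℝ X Y ∈ h)
    (hcomm : ∀ X ∈ g, ∀ Y ∈ h, lieBracket ℝ X Y = 0)
    (hgsurj : ∀ x : E, ∀ v : E, ∃ X ∈ g, X x = v)
    (hhsurj : ∀ x : E, ∀ v : E, ∃ Y ∈ h, Y x = v) :
    (∀ x : E, ∀ X ∈ g, X x = 0 → X = 0) ∧
    (∀ x : E, ∀ Y ∈ h, Y x = 0 → Y = 0) ∧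
    Module.finrank ℝ g = Module.finrank ℝ E ∧
    Module.finrank ℝ h = Module.finrank ℝ E := by
  have keyg : ∀ x : E, ∀ X ∈ g, X x = 0 → X = 0 := by
    intro x X hXg hx
    refine keyLemma h hhsmooth hhsurj X (hgsmooth X hXg) ?_ x hx
    intro Y hY z
    have h0 : fderiv ℝ Y z (X z) - fderiv ℝ X z (Y z) = 0 := congrFun (hcomm X hXg Y hY) z
    exact (sub_eq_zero.mp h0).symm
  have keyh : ∀ x : E, ∀ Y ∈ h, Y x = 0 → Y = 0 := by
    intro x Y hY hx
    refine keyLemma g hgsmooth hgsurj Y (hhsmooth Y hY) ?_ x hx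
    intro X hXg z
    have h0 : fderiv ℝ Y z (X z) - fderiv ℝ X z (Y z) = 0 := congrFun (hcomm X hXg Y hY) z
    exact sub_eq_zero.mp h0
  have franks : ∀ p : Submodule ℝ (E → E), (∀ x : E, ∀ X ∈ p, X x = 0 → X = 0) →
      (∀ x v : E, ∃ X ∈ p, X x = v) → Module.finrank ℝ p = Module.finrank ℝ E := by
    intro p hinj hsurj
    let e : p →ₗ[ℝ] E := (LinearMap.proj (0 : E)).comp p.subtype
    have hbij : Function.Bijective e := by
      constructor
      · rw [← LinearMap.ker_eq_bot]
        rw [Submodule.eq_bot_iff]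
        rintro ⟨X, hXp⟩ hXk
        have hX0 : X 0 = 0 := hXk
        have : X = 0 := hinj 0 X hXp hX0
        exact Subtype.ext this
      · intro v
        obtain ⟨X, hXp, hXv⟩ := hsurj 0 v
        exact ⟨⟨X, hXp⟩, hXv⟩
    exact (LinearEquiv.ofBijective e hbij).finrank_eq
  exact ⟨keyg, keyh, franks g keyg hgsurj, franks h keyh hhsurj⟩
end

section
/- Let M be a smooth n-dimensional manifold and 𝔤 an n-dimensional locally transitive Lie algebra of vector fields on M (i.e., the evaluation map ev_x : 𝔤 → T_x M is a linear isomorphism for every x). Let 𝔥 be the centralizer of 𝔤 in the Lie algebra of all vector fields on M. Then for every point x ∈ M, the composition α_x = (ev_x|_𝔥)^{-1} ∘ (ev_x|_𝔤) : 𝔤 → 𝔥 satisfies α_x([X,Y]) = -[α_x(X), α_x(Y)] for all X, Y ∈ 𝔤, i.e., α_x is a Lie algebra anti-homomorphism. -/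
open VectorField

/-- For an `n`-dimensional locally transitive Lie algebra `𝔤` of vector fields with
locally transitive centralizer `𝔥`, the map `α_x = (ev_x|𝔥)⁻¹ ∘ (ev_x|𝔤)` is a Lie algebra
anti-homomorphism: `α_x([X,Y]) = -[α_x X, α_x Y]`.  Stated via evaluation at `x`: if
`X' x = X x` and `Y' x = Y x` with `X', Y' ∈ 𝔥`, then `[X,Y] x = -[X',Y'] x`. -/
theorem reciprocal_anti_homomorphism
    {E : Type*} [NormedAddCommGroup E] [NormedSpace ℝ E] [FiniteDimensional ℝ E]
    (g h : Submodule ℝ (E → E))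
    (hgsmooth : ∀ X ∈ g, ContDiff ℝ (⊤ : ℕ∞) X)
    (hgbracket : ∀ X ∈ g, ∀ Y ∈ g, lieBracket ℝ X Y ∈ g)
    (hcent : ∀ Z : E → E, Z ∈ h ↔ (ContDiff ℝ (⊤ : ℕ∞) Z ∧ ∀ X ∈ g, lieBracket ℝ Z X = 0))
    (hgeval_inj : ∀ x : E, ∀ X ∈ g, X x = 0 → X = 0)
    (hgeval_surj : ∀ x : E, ∀ v : E, ∃ X ∈ g, X x = v)
    (hheval_inj : ∀ x : E, ∀ Z ∈ h, Z x = 0 → Z = 0)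
    (hheval_surj : ∀ x : E, ∀ v : E, ∃ Z ∈ h, Z x = v) :
    ∀ x : E, ∀ X ∈ g, ∀ Y ∈ g, ∀ X' ∈ h, ∀ Y' ∈ h,
      X' x = X x → Y' x = Y x →
      lieBracket ℝ X Y x = -(lieBracket ℝ X' Y' x) := by
  intro x X hX Y hY X' hX' Y' hY' hXx hYx
  have h1 : lieBracket ℝ X' Y x = 0 := by
    rw [((hcent X').mp hX').2 Y hY]; rfl
  have h2 : lieBracket ℝ Y' X x = 0 := by
    rw [((hcent Y').mp hY').2 X hX]; rfl
  simp only [lieBracket] at h1 h2 ⊢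
  rw [hXx] at h1
  rw [hYx] at h2
  rw [sub_eq_zero] at h1 h2
  rw [← hXx] at h2
  rw [← hYx] at h1
  rw [h1, h2]
  abel
end

section
/- If 𝔤 and 𝔥 are a pair of reciprocal Lie algebras of vector fields on a smooth manifold M (commuting, locally transitive, each evaluation map a linear isomorphism at every point), then the center of 𝔤 equals the center of 𝔥 as a set of vector fields on M. -/
open VectorField

/-- A vector field commuting with every element of a transitive Lie algebra of vector
fields and vanishing at one point vanishes identically. -/
theorem comm_vanish_eq_zero
    {E : Type*} [NormedAddCommGroup E] [NormedSpace ℝ E] [FiniteDimensional ℝ E]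
    (g : Submodule ℝ (E → E))
    (hgsmooth : ∀ X ∈ g, ContDiff ℝ (⊤ : ℕ∞) X)
    (hgeval_inj : ∀ x : E, ∀ X ∈ g, X x = 0 → X = 0)
    (hgeval_surj : ∀ x : E, ∀ v : E, ∃ X ∈ g, X x = v)
    (W : E → E) (hWsm : ContDiff ℝ (⊤ : ℕ∞) W)
    (hWcomm : ∀ X ∈ g, lieBracket ℝ W X = 0)
    (x₀ : E) (hW0 : W x₀ = 0) : W = 0 := by
  classical
  set n := Module.finrank ℝ E with hn
  let e : Module.Basis (Fin n) ℝ E := Module.finBasis ℝ E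
  choose X hXg hXx₀ using fun i : Fin n => hgeval_surj x₀ (e i)
  have hXsm : ∀ i, ContDiff ℝ (⊤ : ℕ∞) (X i) := fun i => hgsmooth _ (hXg i)
  -- the matrix of the evaluation map at a point `p`
  set M : E → Matrix (Fin n) (Fin n) ℝ := fun p => Matrix.of fun i j => e.repr (X j p) i
    with hM
  have hMcont : Continuous M := by
    apply continuous_matrix
    intro i j
    exact ((e.coord i).continuous_of_finiteDimensional).comp (hXsm j).continuous
  -- key computation : `M p *ᵥ c` are the coordinates of `(∑ j, c j • X j) p`
  have hMmul : ∀ (p : E) (c : Fin n → ℝ) (i : Fin n),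
      (M p).mulVec c i = e.repr ((∑ j, c j • X j) p) i := by
    intro p c i
    simp only [Finset.sum_apply, Pi.smul_apply, map_sum, map_smul, Matrix.mulVec,
      dotProduct, Finsupp.coe_finset_sum, Finsupp.coe_smul, hM, Matrix.of_apply]
    exact Finset.sum_congr rfl fun j _ => mul_comm _ _
  have hMunit : ∀ p : E, IsUnit (M p) := by
    intro p
    rw [← Matrix.mulVec_injective_iff_isUnit]
    have h0 : ∀ c : Fin n → ℝ, (M p).mulVec c = 0 → c = 0 := by
      intro c hc
      have hF0 : (∑ j, c j • X j) p = 0 := by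
        have : ∀ i, e.repr ((∑ j, c j • X j) p) i = 0 := by
          intro i
          rw [← hMmul p c i, hc]
          rfl
        have hrepr : e.repr ((∑ j, c j • X j) p) = 0 := Finsupp.ext fun i => this i
        simpa using e.repr.injective (by simpa using hrepr)
      have hFg : (∑ j, c j • X j) ∈ g := Submodule.sum_smul_mem g c fun j _ => hXg j
      have hF : (∑ j, c j • X j) = 0 := hgeval_inj p _ hFg hF0
      have hx₀ : (∑ j, c j • e j) = 0 := by
        have := congrFun hF x₀
        simpa [Finset.sum_apply, hXx₀] using this
      have hli := Fintype.linearIndependent_iff.1 e.linearIndependent c hx₀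
      exact funext hli
    intro c d hcd
    have : (M p).mulVec (c - d) = 0 := by
      rw [Matrix.mulVec_sub, hcd, sub_self]
    have := h0 _ this
    exact sub_eq_zero.1 this
  have hdet : ∀ p : E, (M p).det ≠ 0 := fun p =>
    ((Matrix.isUnit_iff_isUnit_det _).1 (hMunit p)).ne_zero
  -- Now prove `W y = 0` for arbitrary `y`.
  funext y
  show W y = 0
  set v : E := y - x₀ with hv
  -- coefficients expressing `v` in terms of the fields `X j` at `p`
  set afun : E → Fin n → ℝ :=
    fun p => ((M p).det)⁻¹ • ((M p).adjugate.mulVec fun i => e.repr v i) with hafun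
  have hafun_cont : Continuous afun := by
    refine Continuous.smul (f := fun p => ((M p).det)⁻¹)
      (g := fun p => (M p).adjugate.mulVec fun i => e.repr v i) ?_ ?_
    · exact (hMcont.matrix_det).inv₀ hdet
    · exact (hMcont.matrix_adjugate).matrix_mulVec continuous_const
  have hMa : ∀ p : E, (M p).mulVec (afun p) = fun i => e.repr v i := by
    intro p
    rw [hafun]
    simp only [Matrix.mulVec_smul, Matrix.mulVec_mulVec, Matrix.mul_adjugate,
      Matrix.smul_mulVec, Matrix.one_mulVec]
    rw [smul_smul, inv_mul_cancel₀ (hdet p), one_smul]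
  have hsolve : ∀ p : E, (∑ j, afun p j • X j) p = v := by
    intro p
    apply e.repr.injective
    ext i
    rw [← hMmul p (afun p) i, hMa p]
  -- the curve and the linear ODE
  set c : ℝ → E := fun t => x₀ + t • v with hc
  have hccont : Continuous c := by fun_prop
  set A : ℝ → E →L[ℝ] E := fun t => ∑ j, afun (c t) j • fderiv ℝ (X j) (c t) with hA
  have hAcont : Continuous A := by
    apply continuous_finset_sum
    intro j _
    exact (((continuous_apply j).comp (hafun_cont.comp hccont))).smul
      (((hXsm j).continuous_fderiv (by simp)).comp hccont)
  obtain ⟨K, hK⟩ := (isCompact_Icc (a := (0:ℝ)) (b := 1)).exists_bound_of_continuousOn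
    hAcont.continuousOn
  set w : ℝ → E := fun t => W (c t) with hw
  have hWdiff : Differentiable ℝ W := hWsm.differentiable (by simp)
  have hw' : ∀ t : ℝ, HasDerivAt w (fderiv ℝ W (c t) v) t := by
    intro t
    have hcd : HasDerivAt c v t := by
      have h1 : HasDerivAt (fun s : ℝ => s • v) ((1:ℝ) • v) t :=
        (hasDerivAt_id t).smul_const v
      simpa [hc] using h1.const_add x₀
    exact (hWdiff (c t)).hasFDerivAt.comp_hasDerivAt t hcd
  have hkey : ∀ t : ℝ, fderiv ℝ W (c t) v = A t (w t) := by
    intro t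
    set p := c t with hp
    have hFg : (∑ j, afun p j • X j) ∈ g := Submodule.sum_smul_mem g _ fun j _ => hXg j
    have hbr := congrFun (hWcomm _ hFg) p
    simp only [VectorField.lieBracket, Pi.zero_apply, sub_eq_zero] at hbr
    -- hbr : fderiv ℝ (∑ j, afun p j • X j) p (W p) = fderiv ℝ W p ((∑ j, afun p j • X j) p)
    have hFsum : (∑ j, afun p j • X j) = fun q => ∑ j, afun p j • X j q := by
      funext q; simp [Finset.sum_apply]
    have hfd : fderiv ℝ (∑ j, afun p j • X j) p = ∑ j, afun p j • fderiv ℝ (X j) p := by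
      rw [hFsum, fderiv_fun_sum (A := fun j q => afun p j • X j q) fun j _ => ((hXsm j).differentiable (by simp) p).const_smul _]
      congr 1
      funext j
      exact fderiv_const_smul ((hXsm j).differentiable (by simp) p) _
    rw [← hsolve p, ← hbr, hfd]
  have hwcont : ContinuousOn w (Set.Icc 0 1) :=
    (hWsm.continuous.comp hccont).continuousOn
  have hbound : ∀ t ∈ Set.Ico (0:ℝ) 1, ‖fderiv ℝ W (c t) v‖ ≤ K * ‖w t‖ + 0 := by
    intro t ht
    rw [hkey t, add_zero]
    calc ‖A t (w t)‖ ≤ ‖A t‖ * ‖w t‖ := (A t).le_opNorm _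
      _ ≤ K * ‖w t‖ :=
        mul_le_mul_of_nonneg_right (hK t (Set.Ico_subset_Icc_self ht)) (norm_nonneg _)
  have hw0 : ‖w 0‖ ≤ 0 := by
    simp [hw, hc, hW0]
  have hgron := norm_le_gronwallBound_of_norm_deriv_right_le hwcont
    (fun t _ => (hw' t).hasDerivWithinAt) hw0 hbound 1 (by norm_num)
  rw [gronwallBound_ε0_δ0] at hgron
  have hw1 : w 1 = 0 := norm_le_zero_iff.1 hgron
  simpa [hw, hc, hv] using hw1

/-- One inclusion of the centers. -/
theorem center_reciprocal_subset
    {E : Type*} [NormedAddCommGroup E] [NormedSpace ℝ E] [FiniteDimensional ℝ E]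
    (g h : Submodule ℝ (E → E))
    (hgsmooth : ∀ X ∈ g, ContDiff ℝ (⊤ : ℕ∞) X) (hhsmooth : ∀ Y ∈ h, ContDiff ℝ (⊤ : ℕ∞) Y)
    (hcomm : ∀ X ∈ g, ∀ Y ∈ h, lieBracket ℝ X Y = 0)
    (hgeval_inj : ∀ x : E, ∀ X ∈ g, X x = 0 → X = 0)
    (hgeval_surj : ∀ x : E, ∀ v : E, ∃ X ∈ g, X x = v)
    (hheval_surj : ∀ x : E, ∀ v : E, ∃ Y ∈ h, Y x = v) :
    {Z : E → E | Z ∈ g ∧ ∀ X ∈ g, lieBracket ℝ Z X = 0} ⊆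
    {Z : E → E | Z ∈ h ∧ ∀ Y ∈ h, lieBracket ℝ Z Y = 0} := by
  rintro Z ⟨hZg, hZc⟩
  obtain ⟨Y, hYh, hYx⟩ := hheval_surj 0 (Z 0)
  have hZsm : ContDiff ℝ (⊤ : ℕ∞) Z := hgsmooth Z hZg
  have hYsm : ContDiff ℝ (⊤ : ℕ∞) Y := hhsmooth Y hYh
  have hYcommg : ∀ X ∈ g, lieBracket ℝ Y X = 0 := by
    intro X hX
    funext x
    rw [VectorField.lieBracket_swap, congrFun (hcomm X hX Y hYh) x]
    simp
  have hWcomm : ∀ X ∈ g, lieBracket ℝ (Z - Y) X = 0 := by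
    intro X hX
    funext x
    have h1 := congrFun (hZc X hX) x
    have h2 := congrFun (hYcommg X hX) x
    simp only [VectorField.lieBracket, Pi.zero_apply] at h1 h2 ⊢
    have hfd : fderiv ℝ (Z - Y) x = fderiv ℝ Z x - fderiv ℝ Y x := by
      rw [Pi.sub_def]
      exact fderiv_fun_sub (hZsm.differentiable (by simp) x) (hYsm.differentiable (by simp) x)
    rw [hfd, Pi.sub_apply, map_sub, ContinuousLinearMap.sub_apply, sub_sub_sub_comm,
      h1, h2, sub_zero]
  have hW0 : (Z - Y) 0 = 0 := by
    simp [hYx]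
  have hZY : Z - Y = 0 :=
    comm_vanish_eq_zero g hgsmooth hgeval_inj hgeval_surj (Z - Y) (hZsm.sub hYsm)
      hWcomm 0 hW0
  have hZeq : Z = Y := sub_eq_zero.1 hZY
  refine ⟨hZeq ▸ hYh, fun Y' hY' => hcomm Z hZg Y' hY'⟩

/-- For a pair of reciprocal Lie algebras of vector fields `𝔤`, `𝔥` on `M`,
the center of `𝔤` equals the center of `𝔥` as a set of vector fields. -/
theorem center_reciprocal_eq
    {E : Type*} [NormedAddCommGroup E] [NormedSpace ℝ E] [FiniteDimensional ℝ E]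
    (g h : Submodule ℝ (E → E))
    (hgsmooth : ∀ X ∈ g, ContDiff ℝ (⊤ : ℕ∞) X) (hhsmooth : ∀ Y ∈ h, ContDiff ℝ (⊤ : ℕ∞) Y)
    (hgbracket : ∀ X ∈ g, ∀ Y ∈ g, lieBracket ℝ X Y ∈ g)
    (hhbracket : ∀ X ∈ h, ∀ Y ∈ h, lieBracket ℝ X Y ∈ h)
    (hcomm : ∀ X ∈ g, ∀ Y ∈ h, lieBracket ℝ X Y = 0)
    (hgeval_inj : ∀ x : E, ∀ X ∈ g, X x = 0 → X = 0)
    (hgeval_surj : ∀ x : E, ∀ v : E, ∃ X ∈ g, X x = v)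
    (hheval_inj : ∀ x : E, ∀ Y ∈ h, Y x = 0 → Y = 0)
    (hheval_surj : ∀ x : E, ∀ v : E, ∃ Y ∈ h, Y x = v) :
    {Z : E → E | Z ∈ g ∧ ∀ X ∈ g, lieBracket ℝ Z X = 0} =
    {Z : E → E | Z ∈ h ∧ ∀ Y ∈ h, lieBracket ℝ Z Y = 0} := by
  have hcomm' : ∀ Y ∈ h, ∀ X ∈ g, lieBracket ℝ Y X = 0 := by
    intro Y hY X hX
    funext x
    rw [VectorField.lieBracket_swap, congrFun (hcomm X hX Y hY) x]
    simp
  exact Set.Subset.antisymm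
    (center_reciprocal_subset g h hgsmooth hhsmooth hcomm hgeval_inj hgeval_surj hheval_surj)
    (center_reciprocal_subset h g hhsmooth hgsmooth hcomm' hheval_inj hheval_surj hgeval_surj)
end

section
/- Let π : M → B₁ × B₂ be a smooth submersion and ℱ, 𝒢 distributions on M with ℱ ∩ 𝒢 = 0, such that Tπ maps ℱ isomorphically onto TB₁ × {0} and 𝒢 isomorphically onto {0} × TB₂ fiberwise. Let F̃, G̃ be vector fields on B₁ and B₂ respectively (viewed as vector fields on B₁ × B₂), and let F, G be their unique lifts to M contained in ℱ and 𝒢 respectively. If [ℱ, 𝒢] ⊆ ℱ ⊕ 𝒢 and ℱ ⊕ 𝒢 is transversal to the fibers of π (meaning (ℱ ⊕ 𝒢) ∩ ker Tπ = 0), then [F, G] = 0. -/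
open VectorField

/-- Lifts of commuting base vector fields commute: if `π : M → B₁ × B₂` is a submersion,
`ℱ, 𝒢` project isomorphically onto `TB₁ × 0` and `0 × TB₂`, `[ℱ,𝒢] ⊆ ℱ ⊕ 𝒢` and `ℱ ⊕ 𝒢`
is transversal to the fibers, then the lifts `F, G` of vector fields `F̃` on `B₁` and `G̃` on
`B₂` satisfy `[F, G] = 0`. -/
theorem lifts_of_base_fields_commute
    {E B₁ B₂ : Type*} [NormedAddCommGroup E] [NormedSpace ℝ E]
    [NormedAddCommGroup B₁] [NormedSpace ℝ B₁] [NormedAddCommGroup B₂] [NormedSpace ℝ B₂]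
    (π : E → B₁ × B₂) (hπ : ContDiff ℝ (⊤ : ℕ∞) π)
    (hsub : ∀ x, Function.Surjective (fderiv ℝ π x))
    (F G : E → Submodule ℝ E)
    (hFG : ∀ x, F x ⊓ G x = ⊥)
    (hFinj : ∀ x, Set.InjOn (fderiv ℝ π x) (F x))
    (hFmap : ∀ x, (F x).map (fderiv ℝ π x : E →ₗ[ℝ] B₁ × B₂) = Submodule.prod ⊤ ⊥)
    (hGinj : ∀ x, Set.InjOn (fderiv ℝ π x) (G x))
    (hGmap : ∀ x, (G x).map (fderiv ℝ π x : E →ₗ[ℝ] B₁ × B₂) = Submodule.prod ⊥ ⊤)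
    (hbracket : ∀ X Y : E → E, ContDiff ℝ (⊤ : ℕ∞) X → ContDiff ℝ (⊤ : ℕ∞) Y →
      (∀ x, X x ∈ F x) → (∀ x, Y x ∈ G x) → ∀ x, lieBracket ℝ X Y x ∈ F x ⊔ G x)
    (htrans : ∀ x, (F x ⊔ G x) ⊓ LinearMap.ker (fderiv ℝ π x : E →ₗ[ℝ] B₁ × B₂) = ⊥)
    (Ft : B₁ → B₁) (Gt : B₂ → B₂) (hFt : ContDiff ℝ (⊤ : ℕ∞) Ft) (hGt : ContDiff ℝ (⊤ : ℕ∞) Gt)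
    (Fv Gv : E → E) (hFv : ContDiff ℝ (⊤ : ℕ∞) Fv) (hGv : ContDiff ℝ (⊤ : ℕ∞) Gv)
    (hFvF : ∀ x, Fv x ∈ F x) (hGvG : ∀ x, Gv x ∈ G x)
    (hFvrel : ∀ x, fderiv ℝ π x (Fv x) = (Ft (π x).1, 0))
    (hGvrel : ∀ x, fderiv ℝ π x (Gv x) = (0, Gt (π x).2)) :
    lieBracket ℝ Fv Gv = 0 := by
  have hπd : Differentiable ℝ π := hπ.differentiable (by simp)
  have hπ'd : Differentiable ℝ (fderiv ℝ π) :=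
    (hπ.fderiv_right (m := 1) (by exact WithTop.coe_le_coe.mpr (le_top : ((1 + 1 : ℕ) : ℕ∞) ≤ ⊤))).differentiable (by simp)
  have hFvd : Differentiable ℝ Fv := hFv.differentiable (by simp)
  have hGvd : Differentiable ℝ Gv := hGv.differentiable (by simp)
  have key : ∀ x, fderiv ℝ π x (lieBracket ℝ Fv Gv x) = 0 := by
    intro x
    set f'' := fderiv ℝ (fderiv ℝ π) x with hf''
    have hsymm : ∀ v w, f'' v w = f'' w v :=
      second_derivative_symmetric (fun y => (hπd y).hasFDerivAt)
        (hπ'd x).hasFDerivAt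
    -- derivative of x ↦ fderiv π x (Fv x) in direction Gv x
    have hA : ∀ (V : E → E), Differentiable ℝ V → ∀ v,
        fderiv ℝ (fun y => fderiv ℝ π y (V y)) x v
          = f'' v (V x) + fderiv ℝ π x (fderiv ℝ V x v) := by
      intro V hVd v
      rw [fderiv_clm_apply (hπ'd x) (hVd x)]
      simp [hf'', add_comm]
    -- compute the derivative of the π-related field of Fv
    have hF1 : fderiv ℝ (fun y => fderiv ℝ π y (Fv y)) x (Gv x) = 0 := by
      have heq : (fun y => fderiv ℝ π y (Fv y)) = fun y => ((Ft (π y).1 : B₁), (0 : B₂)) :=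
        funext hFvrel
      rw [heq]
      have h1 : HasFDerivAt (fun y => (π y).1)
          ((ContinuousLinearMap.fst ℝ B₁ B₂).comp (fderiv ℝ π x)) x :=
        (ContinuousLinearMap.fst ℝ B₁ B₂).hasFDerivAt.comp x (hπd x).hasFDerivAt
      have h2 : HasFDerivAt (fun y => Ft (π y).1)
          ((fderiv ℝ Ft (π x).1).comp ((ContinuousLinearMap.fst ℝ B₁ B₂).comp (fderiv ℝ π x)))
          x := ((hFt.differentiable (by simp)) (π x).1).hasFDerivAt.comp x h1
      have h3 : HasFDerivAt (fun y => ((Ft (π y).1 : B₁), (0 : B₂)))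
          (((fderiv ℝ Ft (π x).1).comp
            ((ContinuousLinearMap.fst ℝ B₁ B₂).comp (fderiv ℝ π x))).prod 0) x :=
        HasFDerivAt.prodMk h2 (hasFDerivAt_const (0 : B₂) x)
      rw [h3.fderiv]
      have : (fderiv ℝ π x (Gv x)).1 = 0 := by rw [hGvrel]
      simp [ContinuousLinearMap.prod_apply, this]
    have hG1 : fderiv ℝ (fun y => fderiv ℝ π y (Gv y)) x (Fv x) = 0 := by
      have heq : (fun y => fderiv ℝ π y (Gv y)) = fun y => ((0 : B₁), (Gt (π y).2 : B₂)) :=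
        funext hGvrel
      rw [heq]
      have h1 : HasFDerivAt (fun y => (π y).2)
          ((ContinuousLinearMap.snd ℝ B₁ B₂).comp (fderiv ℝ π x)) x :=
        (ContinuousLinearMap.snd ℝ B₁ B₂).hasFDerivAt.comp x (hπd x).hasFDerivAt
      have h2 : HasFDerivAt (fun y => Gt (π y).2)
          ((fderiv ℝ Gt (π x).2).comp ((ContinuousLinearMap.snd ℝ B₁ B₂).comp (fderiv ℝ π x)))
          x := ((hGt.differentiable (by simp)) (π x).2).hasFDerivAt.comp x h1
      have h3 : HasFDerivAt (fun y => ((0 : B₁), (Gt (π y).2 : B₂)))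
          ((0 : E →L[ℝ] B₁).prod ((fderiv ℝ Gt (π x).2).comp
            ((ContinuousLinearMap.snd ℝ B₁ B₂).comp (fderiv ℝ π x)))) x :=
        HasFDerivAt.prodMk (hasFDerivAt_const (0 : B₁) x) h2
      rw [h3.fderiv]
      have : (fderiv ℝ π x (Fv x)).2 = 0 := by rw [hFvrel]
      simp [ContinuousLinearMap.prod_apply, this]
    have eF : f'' (Gv x) (Fv x) + fderiv ℝ π x (fderiv ℝ Fv x (Gv x)) = 0 := by
      rw [← hA Fv hFvd (Gv x), hF1]
    have eG : f'' (Fv x) (Gv x) + fderiv ℝ π x (fderiv ℝ Gv x (Fv x)) = 0 := by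
      rw [← hA Gv hGvd (Fv x), hG1]
    have : fderiv ℝ π x (fderiv ℝ Gv x (Fv x)) = fderiv ℝ π x (fderiv ℝ Fv x (Gv x)) := by
      rw [eq_neg_of_add_eq_zero_right eG, eq_neg_of_add_eq_zero_right eF,
        hsymm (Gv x) (Fv x)]
    simp [lieBracket, map_sub, this]
  funext x
  have hmem : lieBracket ℝ Fv Gv x ∈ (F x ⊔ G x) ⊓ LinearMap.ker (fderiv ℝ π x : E →ₗ[ℝ] B₁ × B₂) :=
    ⟨hbracket Fv Gv hFv hGv hFvF hGvG x, key x⟩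
  rw [htrans x] at hmem
  simpa using hmem
end

section
/- Let M be a smooth manifold, 𝒢 a smooth distribution on M, and X₁, …, X_s smooth vector fields on M, linearly independent at every point, such that [Xⱼ, Y] ⊆ 𝒢 for every j and every vector field Y ⊆ 𝒢. Suppose X = Σⱼ cʲ Xⱼ for smooth functions cʲ, and [X, Y] ⊆ 𝒢 for all vector fields Y ⊆ 𝒢, and suppose the span of X₁,…,X_s intersects 𝒢 trivially at every point. Then Y(cʲ) = 0 for every vector field Y contained in 𝒢 and every j, i.e., each coefficient cʲ is an invariant of 𝒢. -/
open VectorField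

/-- If `X = Σⱼ cʲ Xⱼ` where the `Xⱼ` are pointwise independent vector fields whose brackets
with any vector field contained in `𝒢` lie in `𝒢`, the span of the `Xⱼ` meets `𝒢`
trivially, and `[X, Y] ⊆ 𝒢` for all `Y ⊆ 𝒢`, then each coefficient `cʲ` is an invariant
of `𝒢`: `Y(cʲ) = 0` for every vector field `Y` contained in `𝒢`. -/
theorem coefficients_are_invariants
    {E : Type*} [NormedAddCommGroup E] [NormedSpace ℝ E] [FiniteDimensional ℝ E]
    (G : E → Submodule ℝ E) (s : ℕ) (X : Fin s → E → E)
    (hXs : ∀ j, ContDiff ℝ (⊤ : ℕ∞) (X j))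
    (hli : ∀ x, LinearIndependent ℝ fun j => X j x)
    (hXbr : ∀ j, ∀ Y : E → E, ContDiff ℝ (⊤ : ℕ∞) Y → (∀ x, Y x ∈ G x) →
      ∀ x, lieBracket ℝ (X j) Y x ∈ G x)
    (c : Fin s → E → ℝ) (hc : ∀ j, ContDiff ℝ (⊤ : ℕ∞) (c j))
    (Xv : E → E) (hXv : ∀ x, Xv x = ∑ j, c j x • X j x)
    (hXvbr : ∀ Y : E → E, ContDiff ℝ (⊤ : ℕ∞) Y → (∀ x, Y x ∈ G x) →
      ∀ x, lieBracket ℝ Xv Y x ∈ G x)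
    (htriv : ∀ x, Submodule.span ℝ (Set.range fun j => X j x) ⊓ G x = ⊥) :
    ∀ Y : E → E, ContDiff ℝ (⊤ : ℕ∞) Y → (∀ x, Y x ∈ G x) →
      ∀ j x, fderiv ℝ (c j) x (Y x) = 0 := by
  intro Y hY hYG j x
  set d : Fin s → ℝ := fun j => fderiv ℝ (c j) x (Y x) with hd
  set v : E := ∑ j, d j • X j x with hv
  -- derivative of Xv
  have hXvfun : Xv = fun y => ∑ j, c j y • X j y := funext hXv
  have hdiff : ∀ j, DifferentiableAt ℝ (fun y => c j y • X j y) x := fun j =>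
    ((hc j).differentiable (by simp) x).smul ((hXs j).differentiable (by simp) x)
  have hfd : fderiv ℝ Xv x (Y x)
      = ∑ j, (c j x • fderiv ℝ (X j) x (Y x) + d j • X j x) := by
    rw [hXvfun, fderiv_fun_sum (fun j _ => hdiff j)]
    rw [ContinuousLinearMap.sum_apply]
    refine Finset.sum_congr rfl fun j _ => ?_
    rw [fderiv_fun_smul ((hc j).differentiable (by simp) x) ((hXs j).differentiable (by simp) x)]
    simp [hd]
  have hfd2 : fderiv ℝ Y x (Xv x) = ∑ j, c j x • fderiv ℝ Y x (X j x) := by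
    rw [hXv x, map_sum]
    simp
  have key : v = (∑ j, c j x • lieBracket ℝ (X j) Y x) - lieBracket ℝ Xv Y x := by
    simp only [lieBracket, hfd, hfd2, smul_sub, Finset.sum_sub_distrib, Finset.sum_add_distrib]
    abel
  have hvG : v ∈ G x := by
    rw [key]
    exact Submodule.sub_mem _
      (Submodule.sum_mem _ fun j _ => Submodule.smul_mem _ _ (hXbr j Y hY hYG x))
      (hXvbr Y hY hYG x)
  have hvspan : v ∈ Submodule.span ℝ (Set.range fun j => X j x) :=
    Submodule.sum_mem _ fun j _ =>
      Submodule.smul_mem _ _ (Submodule.subset_span ⟨j, rfl⟩)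
  have hv0 : v = 0 := by
    have : v ∈ Submodule.span ℝ (Set.range fun j => X j x) ⊓ G x := ⟨hvspan, hvG⟩
    rw [htriv x] at this
    simpa using this
  have := Fintype.linearIndependent_iff.1 (hli x) d hv0 j
  simpa [hd] using this
end
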